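/- arXiv:2404.11693 — 3 statements merged into one kernel-verified Lean document; each statement's English description precedes it below -/
import Mathlib

section
/- Assume (φ1)–(φ3), let V(t) = Φ(|t² − α²|), and let q be a heteroclinic solution of problem (P). If m − 1 < 1, then α·tanh(αt) ≤ q(t) ≤ α·tanh(αt/(l−1)) for all t ≥ 0. -/
/-
Along a solution, `Ψ(q') - V(q)` with `Ψ(s) = s Φ'(s) - Φ(s)` is constant, and it vanishes
because `q' → 0` along a sequence `tₙ → ∞`. Integrating (φ2) gives
`(l-1) Φ ≤ Ψ ≤ (m-1) Φ` on `[0, ∞)`, and with the convexity of `Φ` from (φ1) and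
`m - 1 < 1` this turns `Ψ(q') = V(q)` into `(l-1) |q'| ≤ |q² - α²| < |q'|`. The first bound
is a linear Grönwall bound for `z = q² - α²`, so `z`, which equals `-α²` at `0`, never vanishes;
hence `q'` never vanishes, `q` is increasing and `0 ≤ q < α` on `[0, ∞)`. There
`α² - q² < q' ≤ (α² - q²)/(l-1)`, and comparing with the solutions `α tanh(αt)` and
`α tanh(αt/(l-1))` of the Riccati equations `y' = α² - y²` and `(l-1) y' = α² - y²` gives the
two bounds.
-/

open Real Filter Set MeasureTheory

noncomputable def Phi (φ : ℝ → ℝ) (t : ℝ) : ℝ := ∫ s in (0:ℝ)..|t|, s * φ s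

def IsClassicalSolution (φ V q : ℝ → ℝ) : Prop :=
  Differentiable ℝ q ∧
  ∀ t : ℝ, HasDerivAt
    (fun s => if deriv q s = 0 then 0 else φ |deriv q s| * deriv q s)
    (deriv V (q t)) t

def IsHeteroclinic (φ V : ℝ → ℝ) (α : ℝ) (q : ℝ → ℝ) : Prop :=
  IsClassicalSolution φ V q ∧ Differentiable ℝ (deriv q) ∧ Continuous (deriv q) ∧
  q 0 = 0 ∧ Tendsto q atTop (nhds α) ∧ Tendsto q atBot (nhds (-α))

open Topology

lemma le_of_hasDerivAt_le_on_Ici {f g f' g' : ℝ → ℝ} {a x : ℝ} (hf : ContinuousOn f (Ici a))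
    (hg : ContinuousOn g (Ici a)) (hf' : ∀ t > a, HasDerivAt f (f' t) t)
    (hg' : ∀ t > a, HasDerivAt g (g' t) t) (ha : f a ≤ g a) (hle : ∀ t > a, f' t ≤ g' t)
    (hx : a ≤ x) : f x ≤ g x := by
  have hd : ∀ t > a, HasDerivAt (fun t => g t - f t) (g' t - f' t) t :=
    fun t ht => (hg' t ht).sub (hf' t ht)
  have hmono : MonotoneOn (fun t => g t - f t) (Ici a) := by
    refine monotoneOn_of_deriv_nonneg (convex_Ici a) (hg.sub hf) (fun t ht => ?_) fun t ht => ?_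
    all_goals rw [interior_Ici] at ht
    · exact (hd t ht).differentiableAt.differentiableWithinAt
    · rw [(hd t ht).deriv, sub_nonneg]
      exact hle t ht
  linarith [hmono self_mem_Ici (mem_Ici.2 hx) hx]

lemma nonneg_of_deriv_add_mul_nonneg {w w' a : ℝ → ℝ} (hw : ∀ t, HasDerivAt w (w' t) t)
    (ha : Continuous a) (h₀ : 0 ≤ w 0) (h : ∀ t > 0, 0 ≤ w' t + a t * w t) {t : ℝ}
    (ht : 0 ≤ t) : 0 ≤ w t := by
  set R : ℝ → ℝ := fun t => ∫ s in (0:ℝ)..t, a s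
  have hR : ∀ t, HasDerivAt R (a t) t := fun t => (ha.integral_hasStrictDerivAt 0 t).hasDerivAt
  -- integrating factor: `w * exp R` is nondecreasing
  have hE : ∀ t, HasDerivAt (fun t => w t * exp (R t)) ((w' t + a t * w t) * exp (R t)) t :=
    fun t => ((hw t).mul ((hR t).exp)).congr_deriv (by ring)
  have := le_of_hasDerivAt_le_on_Ici (f := fun _ => 0) continuousOn_const
    (continuous_iff_continuousAt.2 fun t => (hE t).continuousAt).continuousOn
    (fun t _ => hasDerivAt_const t 0) (fun t _ => hE t) (by simpa [R] using h₀)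
    (fun t ht => mul_nonneg (h t ht) (exp_pos _).le) ht
  exact nonneg_of_mul_nonneg_left this (exp_pos _)

lemma le_of_mul_deriv_add_sq_le {f g : ℝ → ℝ} {c : ℝ} (hc : 0 < c) (hf : Differentiable ℝ f)
    (hg : Differentiable ℝ g) (h₀ : f 0 ≤ g 0)
    (h : ∀ t > 0, c * deriv f t + f t ^ 2 ≤ c * deriv g t + g t ^ 2) {t : ℝ} (ht : 0 ≤ t) :
    f t ≤ g t := by
  refine sub_nonneg.1 <| nonneg_of_deriv_add_mul_nonneg (a := fun t => (f t + g t) / c)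
    (fun t => (hg t).hasDerivAt.sub (hf t).hasDerivAt)
    ((hf.continuous.add hg.continuous).div_const c) (sub_nonneg.2 h₀) (fun t ht => ?_) ht
  have key : 0 ≤ c * (deriv g t - deriv f t) + (f t + g t) * (g t - f t) := by
    linarith [h t ht]
  calc (0 : ℝ) ≤ (c * (deriv g t - deriv f t) + (f t + g t) * (g t - f t)) / c :=
        div_nonneg key hc.le
    _ = deriv g t - deriv f t + (f t + g t) / c * (g t - f t) := by field_simp

lemma eq_zero_of_abs_deriv_le_mul_abs_of_le {z z' K : ℝ → ℝ}
    (hz : ∀ t, HasDerivAt z (z' t) t) (hK : Continuous K) (hb : ∀ t, |z' t| ≤ K t * |z t|)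
    {t₀ t : ℝ} (h₀ : z t₀ = 0) (ht : t₀ ≤ t) : z t = 0 := by
  obtain ⟨C, hC⟩ := (isCompact_Icc (a := t₀) (b := t)).exists_bound_of_continuousOn hK.continuousOn
  refine eq_zero_of_abs_deriv_le_mul_abs_self_of_eq_zero_right (K := C)
    (continuous_iff_continuousAt.2 fun s => (hz s).continuousAt).continuousOn
    (fun s _ => (hz s).hasDerivWithinAt) h₀ (fun s hs => ?_) t ⟨ht, le_rfl⟩
  have hKC : K s ≤ C := (le_abs_self _).trans (hC s (Ico_subset_Icc_self hs))
  calc ‖z' s‖ = |z' s| := rfl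
    _ ≤ K s * |z s| := hb s
    _ ≤ C * ‖z s‖ := mul_le_mul_of_nonneg_right hKC (abs_nonneg _)

lemma eq_zero_of_abs_deriv_le_mul_abs {z z' K : ℝ → ℝ}
    (hz : ∀ t, HasDerivAt z (z' t) t) (hK : Continuous K) (hb : ∀ t, |z' t| ≤ K t * |z t|)
    {t₀ : ℝ} (h₀ : z t₀ = 0) (t : ℝ) : z t = 0 := by
  rcases le_total t₀ t with ht | ht
  · exact eq_zero_of_abs_deriv_le_mul_abs_of_le hz hK hb h₀ ht
  · simpa using eq_zero_of_abs_deriv_le_mul_abs_of_le (z := fun s => z (-s))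
      (z' := fun s => -z' (-s)) (K := fun s => K (-s))
      (fun s => ((hz (-s)).scomp s (hasDerivAt_neg s)).congr_deriv (by simp))
      (hK.comp continuous_neg)
      (fun s => by simpa using hb (-s)) (t₀ := -t₀) (by simpa using h₀) (neg_le_neg ht)

lemma exists_seq_tendsto_deriv_zero {q : ℝ → ℝ} {a : ℝ} (hq : Differentiable ℝ q)
    (htop : Tendsto q atTop (𝓝 a)) :
    ∃ τ : ℕ → ℝ, Tendsto τ atTop atTop ∧ Tendsto (fun n => deriv q (τ n)) atTop (𝓝 0) := by
  choose τ hτ hslope using fun n : ℕ => exists_deriv_eq_slope q (lt_add_one (n : ℝ))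
    hq.continuous.continuousOn (hq.differentiableOn.mono Ioo_subset_Icc_self)
  refine ⟨τ, tendsto_atTop_mono (fun n => (hτ n).1.le) tendsto_natCast_atTop_atTop, ?_⟩
  have hnat : Tendsto (fun n : ℕ => q n) atTop (𝓝 a) := htop.comp tendsto_natCast_atTop_atTop
  have hsucc : Tendsto (fun n : ℕ => q (n + 1)) atTop (𝓝 a) := by
    exact_mod_cast hnat.comp (tendsto_add_atTop_nat 1)
  simpa [hslope] using hsucc.sub hnat

lemma deriv_pos_of_deriv_ne_zero {q : ℝ → ℝ} {a : ℝ} (hq : Differentiable ℝ q)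
    (hq' : Continuous (deriv q)) (hne : ∀ t, deriv q t ≠ 0) (h₀ : q 0 < a)
    (htop : Tendsto q atTop (𝓝 a)) (t : ℝ) : 0 < deriv q t := by
  by_contra! ht
  have hanti : Antitone q := antitone_of_deriv_nonpos hq fun s => by
    by_contra! hs
    obtain ⟨x, hx⟩ := intermediate_value_univ₂ hq' continuous_const ht hs.le
    exact hne x hx
  exact h₀.not_ge (hanti.le_of_tendsto htop 0)

lemma hasDerivAt_tanh (x : ℝ) : HasDerivAt tanh (1 - tanh x ^ 2) x := by
  have h : HasDerivAt (fun y => sinh y / cosh y) _ x :=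
    (hasDerivAt_sinh x).div (hasDerivAt_cosh x) (cosh_pos x).ne'
  simp only [← tanh_eq_sinh_div_cosh] at h
  refine h.congr_deriv ?_
  rw [tanh_eq_sinh_div_cosh, div_pow, eq_sub_iff_add_eq, ← add_div, ← sq, ← sq,
    sub_add_cancel, div_self (pow_pos (cosh_pos x) 2).ne']

lemma hasDerivAt_mul_tanh_div (a c t : ℝ) (hc : c ≠ 0) :
    HasDerivAt (fun t => a * tanh (a * t / c)) ((a ^ 2 - (a * tanh (a * t / c)) ^ 2) / c) t := by
  have := ((hasDerivAt_tanh (a * t / c)).comp t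
    (((hasDerivAt_id t).const_mul a).div_const c)).const_mul a
  refine this.congr_deriv ?_
  field_simp

lemma mul_tanh_le_of_sq_le {q : ℝ → ℝ} {a c : ℝ} (hc : 0 < c) (hq : Differentiable ℝ q)
    (h₀ : 0 ≤ q 0) (h : ∀ t > 0, a ^ 2 ≤ c * deriv q t + q t ^ 2) {t : ℝ} (ht : 0 ≤ t) :
    a * tanh (a * t / c) ≤ q t := by
  have hu := fun t => hasDerivAt_mul_tanh_div a c t hc.ne'
  refine le_of_mul_deriv_add_sq_le hc (fun t => (hu t).differentiableAt) hq (by simpa using h₀)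
    (fun t ht => ?_) ht
  rw [(hu t).deriv, mul_div_cancel₀ _ hc.ne', sub_add_cancel]
  exact h t ht

lemma le_mul_tanh_of_le_sq {q : ℝ → ℝ} {a c : ℝ} (hc : 0 < c) (hq : Differentiable ℝ q)
    (h₀ : q 0 ≤ 0) (h : ∀ t > 0, c * deriv q t + q t ^ 2 ≤ a ^ 2) {t : ℝ} (ht : 0 ≤ t) :
    q t ≤ a * tanh (a * t / c) := by
  have hu := fun t => hasDerivAt_mul_tanh_div a c t hc.ne'
  refine le_of_mul_deriv_add_sq_le hc hq (fun t => (hu t).differentiableAt) (by simpa using h₀)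
    (fun t ht => ?_) ht
  rw [(hu t).deriv, mul_div_cancel₀ _ hc.ne', sub_add_cancel]
  exact h t ht

-- The junk value `φ 0` is multiplied by `0`, so no case split at `0` is needed.
def dPhi (φ : ℝ → ℝ) (x : ℝ) : ℝ := x * φ |x|

section Phi

variable {φ : ℝ → ℝ}

@[simp] lemma Phi_zero : Phi φ 0 = 0 := by simp [Phi]

@[simp] lemma Phi_abs (x : ℝ) : Phi φ |x| = Phi φ x := by rw [Phi, abs_abs, Phi]

@[simp] lemma Phi_neg (x : ℝ) : Phi φ (-x) = Phi φ x := by rw [Phi, abs_neg, Phi]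

@[simp] lemma dPhi_zero : dPhi φ 0 = 0 := by simp [dPhi]

lemma dPhi_neg (x : ℝ) : dPhi φ (-x) = -dPhi φ x := by simp [dPhi]

lemma dPhi_of_nonneg {x : ℝ} (hx : 0 ≤ x) : dPhi φ x = φ x * x := by
  rw [dPhi, abs_of_nonneg hx, mul_comm]

lemma Phi_eq_integral_dPhi_of_nonneg {x : ℝ} (hx : 0 ≤ x) :
    Phi φ x = ∫ s in (0:ℝ)..x, dPhi φ s := by
  rw [Phi, abs_of_nonneg hx]
  refine intervalIntegral.integral_congr fun s hs => ?_
  rw [uIcc_of_le hx] at hs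
  rw [dPhi, abs_of_nonneg hs.1]

lemma Phi_eq_integral_dPhi (x : ℝ) : Phi φ x = ∫ s in (0:ℝ)..x, dPhi φ s := by
  rcases le_total 0 x with hx | hx
  · exact Phi_eq_integral_dPhi_of_nonneg hx
  rw [← Phi_neg, Phi_eq_integral_dPhi_of_nonneg (neg_nonneg.2 hx)]
  calc ∫ s in (0:ℝ)..-x, dPhi φ s = -∫ s in -x..-0, dPhi φ s := by
        rw [neg_zero, intervalIntegral.integral_symm]
    _ = ∫ s in (0:ℝ)..x, dPhi φ s := by
        simp only [← intervalIntegral.integral_comp_neg, dPhi_neg, intervalIntegral.integral_neg,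
          neg_neg]

lemma tendsto_mul_nhdsGT_zero_of_le_rpow {φ : ℝ → ℝ} {c δ r : ℝ} (hδ : 0 < δ) (hr : 1 < r)
    (hpos : ∀ t > 0, 0 < φ t) (hle : ∀ t, 0 < t → t ≤ δ → φ t * t ≤ c * t ^ (r - 1)) :
    Tendsto (fun t => t * φ t) (𝓝[>] 0) (𝓝 0) := by
  have hlim : Tendsto (fun t : ℝ => c * t ^ (r - 1)) (𝓝[>] 0) (𝓝 0) := by
    have hc : ContinuousAt (fun t : ℝ => c * t ^ (r - 1)) 0 :=
      continuousAt_const.mul (continuousAt_rpow_const 0 (r - 1) (Or.inr (by linarith)))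
    have := hc.tendsto.mono_left (nhdsWithin_le_nhds (s := Ioi 0))
    rwa [zero_rpow (by linarith), mul_zero] at this
  refine squeeze_zero' ?_ ?_ hlim
  · filter_upwards [self_mem_nhdsWithin] with t ht
    exact (mul_pos ht (hpos t ht)).le
  · filter_upwards [Ioc_mem_nhdsGT hδ] with t ht
    rw [mul_comm]
    exact hle t ht.1 ht.2

lemma continuous_dPhi (hφ : ContinuousOn φ (Ioi 0))
    (h0 : Tendsto (fun t => t * φ t) (𝓝[>] 0) (𝓝 0)) : Continuous (dPhi φ) := by
  refine continuous_iff_continuousAt.2 fun x => ?_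
  rcases eq_or_ne x 0 with rfl | hx
  · rw [← continuousWithinAt_compl_self, ContinuousWithinAt, dPhi_zero,
      tendsto_zero_iff_norm_tendsto_zero]
    have : Tendsto (fun x => |x| * φ |x|) (𝓝[≠] 0) (𝓝 0) := h0.comp tendsto_abs_nhdsNE_zero
    simpa [dPhi, abs_mul] using this.norm
  · exact continuousAt_id.mul <|
      (hφ.continuousAt (Ioi_mem_nhds (abs_pos.2 hx))).comp continuous_abs.continuousAt

lemma hasDerivAt_Phi (hφ : Continuous (dPhi φ)) (x : ℝ) : HasDerivAt (Phi φ) (dPhi φ x) x := by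
  rw [show Phi φ = fun x => ∫ s in (0:ℝ)..x, dPhi φ s from funext Phi_eq_integral_dPhi]
  exact (hφ.integral_hasStrictDerivAt 0 x).hasDerivAt

lemma continuous_Phi (hφ : Continuous (dPhi φ)) : Continuous (Phi φ) :=
  continuous_iff_continuousAt.2 fun x => (hasDerivAt_Phi hφ x).continuousAt

lemma strictMonoOn_Phi (hφ : Continuous (dPhi φ)) (hpos : ∀ t > 0, 0 < φ t) :
    StrictMonoOn (Phi φ) (Ici 0) := by
  refine strictMonoOn_of_deriv_pos (convex_Ici 0) (continuous_Phi hφ).continuousOn fun x hx => ?_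
  rw [interior_Ici] at hx
  rw [(hasDerivAt_Phi hφ x).deriv, dPhi_of_nonneg (le_of_lt hx)]
  exact mul_pos (hpos x hx) hx

lemma Phi_pos (hφ : Continuous (dPhi φ)) (hpos : ∀ t > 0, 0 < φ t) {x : ℝ} (hx : x ≠ 0) :
    0 < Phi φ x := by
  rw [← Phi_abs, ← Phi_zero (φ := φ)]
  exact strictMonoOn_Phi hφ hpos self_mem_Ici (abs_nonneg x) (abs_pos.2 hx)

lemma convexOn_Phi (hφ : Continuous (dPhi φ)) (hmono : MonotoneOn (fun t => φ t * t) (Ioi 0)) :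
    ConvexOn ℝ (Ici 0) (Phi φ) := by
  refine MonotoneOn.convexOn_of_deriv (convex_Ici 0) (continuous_Phi hφ).continuousOn
    (fun x _ => (hasDerivAt_Phi hφ x).differentiableAt.differentiableWithinAt) ?_
  rw [interior_Ici]
  intro x hx y hy hxy
  simp only [(hasDerivAt_Phi hφ _).deriv, dPhi_of_nonneg (le_of_lt (mem_Ioi.1 hx)),
    dPhi_of_nonneg (le_of_lt (mem_Ioi.1 hy))]
  exact hmono hx hy hxy

lemma Phi_mul_le (hconv : ConvexOn ℝ (Ici 0) (Phi φ)) {c s : ℝ} (hc₀ : 0 ≤ c) (hc₁ : c ≤ 1)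
    (hs : 0 ≤ s) : Phi φ (c * s) ≤ c * Phi φ s := by
  simpa using hconv.2 (mem_Ici.2 hs) self_mem_Ici hc₀ (sub_nonneg.2 hc₁) (add_sub_cancel c 1)

end Phi

noncomputable def legendrePhi (φ : ℝ → ℝ) (s : ℝ) : ℝ := s * dPhi φ s - Phi φ s

section Legendre

variable {φ : ℝ → ℝ}

@[simp] lemma legendrePhi_zero : legendrePhi φ 0 = 0 := by simp [legendrePhi]

@[simp] lemma legendrePhi_abs (s : ℝ) : legendrePhi φ |s| = legendrePhi φ s := by
  rcases le_total 0 s with hs | hs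
  · rw [abs_of_nonneg hs]
  · rw [abs_of_nonpos hs, legendrePhi, legendrePhi, dPhi_neg, Phi_neg, neg_mul_neg]

lemma continuous_legendrePhi (hφ : Continuous (dPhi φ)) : Continuous (legendrePhi φ) :=
  (continuous_id.mul hφ).sub (continuous_Phi hφ)

lemma hasDerivAt_legendrePhi (hφ : Continuous (dPhi φ)) {t : ℝ} (ht : 0 < t)
    (hd : DifferentiableAt ℝ φ t) :
    HasDerivAt (legendrePhi φ) (t * deriv (fun s => φ s * s) t) t := by
  have hψ : HasDerivAt (fun s => φ s * s) (deriv (fun s => φ s * s) t) t :=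
    (hd.mul differentiableAt_id).hasDerivAt
  have hev : (fun s => s * (φ s * s) - Phi φ s) =ᶠ[𝓝 t] legendrePhi φ := by
    filter_upwards [Ioi_mem_nhds ht] with s hs
    rw [legendrePhi, dPhi_of_nonneg (le_of_lt hs)]
  refine (((hasDerivAt_id t).mul hψ).sub (hasDerivAt_Phi hφ t)).congr_of_eventuallyEq hev.symm
    |>.congr_deriv ?_
  rw [dPhi_of_nonneg ht.le]
  simp only [id]
  ring

lemma mul_Phi_le_legendrePhi (hφ : Continuous (dPhi φ))
    (hd : ∀ t > 0, DifferentiableAt ℝ φ t) {c : ℝ}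
    (hc : ∀ t > 0, c * φ t ≤ deriv (fun s => φ s * s) t) {s : ℝ} (hs : 0 ≤ s) :
    c * Phi φ s ≤ legendrePhi φ s := by
  refine le_of_hasDerivAt_le_on_Ici (f := fun s => c * Phi φ s)
    ((continuous_Phi hφ).const_smul c).continuousOn
    (continuous_legendrePhi hφ).continuousOn (fun t _ => (hasDerivAt_Phi hφ t).const_mul c)
    (fun t ht => hasDerivAt_legendrePhi hφ ht (hd t ht)) (by simp) (fun t ht => ?_) hs
  rw [dPhi_of_nonneg ht.le]
  linarith [mul_le_mul_of_nonneg_left (hc t ht) ht.le]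

lemma legendrePhi_le_mul_Phi (hφ : Continuous (dPhi φ))
    (hd : ∀ t > 0, DifferentiableAt ℝ φ t) {c : ℝ}
    (hc : ∀ t > 0, deriv (fun s => φ s * s) t ≤ c * φ t) {s : ℝ} (hs : 0 ≤ s) :
    legendrePhi φ s ≤ c * Phi φ s := by
  refine le_of_hasDerivAt_le_on_Ici (g := fun s => c * Phi φ s)
    (continuous_legendrePhi hφ).continuousOn ((continuous_Phi hφ).const_smul c).continuousOn
    (fun t ht => hasDerivAt_legendrePhi hφ ht (hd t ht))
    (fun t _ => (hasDerivAt_Phi hφ t).const_mul c)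
    (by simp) (fun t ht => ?_) hs
  rw [dPhi_of_nonneg ht.le]
  linarith [mul_le_mul_of_nonneg_left (hc t ht) ht.le]

end Legendre

lemma legendrePhi_deriv_eq_of_tendsto {φ V V' q : ℝ → ℝ} {a : ℝ} (hφ : Continuous (dPhi φ))
    (hV : ∀ x, HasDerivAt V (V' x) x) (hq : Differentiable ℝ q)
    (hq' : Differentiable ℝ (deriv q))
    (hflux : ∀ t, HasDerivAt (fun s => dPhi φ (deriv q s)) (V' (q t)) t)
    (htop : Tendsto q atTop (𝓝 a)) (hVa : V a = 0) (t : ℝ) :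
    legendrePhi φ (deriv q t) = V (q t) := by
  -- `E` is constant and tends to `legendrePhi φ 0 - V a = 0` along a sequence where `q' → 0`
  set E := fun t => legendrePhi φ (deriv q t) - V (q t)
  have hE : ∀ t, HasDerivAt E 0 t := fun t =>
    ((((hq' t).hasDerivAt.mul (hflux t)).sub
      ((hasDerivAt_Phi hφ _).comp t (hq' t).hasDerivAt)).sub
      ((hV (q t)).comp t (hq t).hasDerivAt)).congr_deriv (by ring)
  have hconst : ∀ s, E s = E t := fun s =>
    is_const_of_deriv_eq_zero (fun u => (hE u).differentiableAt) (fun u => (hE u).deriv) s t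
  obtain ⟨τ, hτ, hτ'⟩ := exists_seq_tendsto_deriv_zero hq htop
  have hlim : Tendsto (fun n => E (τ n)) atTop (𝓝 0) := by
    simpa [E, hVa] using (((continuous_legendrePhi hφ).tendsto 0).comp hτ').sub
      (((hV a).continuousAt.tendsto).comp (htop.comp hτ))
  simp only [hconst] at hlim
  exact sub_eq_zero.1 (tendsto_nhds_unique tendsto_const_nhds hlim)

/-- Conditions (φ1)–(φ3) of the paper; (φ3) is recorded through its consequence
`Continuous (dPhi φ)`, i.e. `Φ` is `C¹`. -/
structure PhiGrowth (φ : ℝ → ℝ) (l m : ℝ) : Prop where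
  continuous_dPhi : Continuous (dPhi φ)
  pos : ∀ t > 0, 0 < φ t
  differentiableAt : ∀ t > 0, DifferentiableAt ℝ φ t
  monotoneOn : MonotoneOn (fun t => φ t * t) (Ioi 0)
  le_deriv : ∀ t > 0, (l - 1) * φ t ≤ deriv (fun s => φ s * s) t
  deriv_le : ∀ t > 0, deriv (fun s => φ s * s) t ≤ (m - 1) * φ t

namespace PhiGrowth

variable {φ : ℝ → ℝ} {l m : ℝ}

lemma mul_le_of_legendrePhi_eq (hG : PhiGrowth φ l m) (hl : 1 ≤ l) (hl₂ : l ≤ 2) {s y : ℝ}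
    (hs : 0 ≤ s) (hy : 0 ≤ y) (h : legendrePhi φ s = Phi φ y) : (l - 1) * s ≤ y := by
  refine ((strictMonoOn_Phi hG.continuous_dPhi hG.pos).le_iff_le
    (mem_Ici.2 (mul_nonneg (by linarith) hs)) (mem_Ici.2 hy)).1 ?_
  calc Phi φ ((l - 1) * s)
      ≤ (l - 1) * Phi φ s :=
        Phi_mul_le (convexOn_Phi hG.continuous_dPhi hG.monotoneOn) (by linarith) (by linarith) hs
    _ ≤ legendrePhi φ s :=
        mul_Phi_le_legendrePhi hG.continuous_dPhi hG.differentiableAt hG.le_deriv hs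
    _ = Phi φ y := h

lemma lt_of_legendrePhi_eq (hG : PhiGrowth φ l m) (hm : m < 2) {s y : ℝ} (hs : 0 < s)
    (hy : 0 ≤ y) (h : legendrePhi φ s = Phi φ y) : y < s := by
  refine ((strictMonoOn_Phi hG.continuous_dPhi hG.pos).lt_iff_lt (mem_Ici.2 hy)
    (mem_Ici.2 hs.le)).1 ?_
  have hΦ := Phi_pos hG.continuous_dPhi hG.pos hs.ne'
  calc Phi φ y = legendrePhi φ s := h.symm
    _ ≤ (m - 1) * Phi φ s :=
        legendrePhi_le_mul_Phi hG.continuous_dPhi hG.differentiableAt hG.deriv_le hs.le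
    _ < Phi φ s := by nlinarith

end PhiGrowth

section Heteroclinic

variable {φ q : ℝ → ℝ} {α l m : ℝ}

lemma hasDerivAt_Phi_sq_sub_sq (hφ : Continuous (dPhi φ)) (α x : ℝ) :
    HasDerivAt (fun x => Phi φ (x ^ 2 - α ^ 2)) (dPhi φ (x ^ 2 - α ^ 2) * (2 * x)) x :=
  ((hasDerivAt_Phi hφ _).comp x ((hasDerivAt_pow 2 x).sub_const (α ^ 2))).congr_deriv
    (by norm_num)

lemma IsClassicalSolution.hasDerivAt_dPhi_deriv (hφ : Continuous (dPhi φ))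
    (hq : IsClassicalSolution φ (fun x => Phi φ |x ^ 2 - α ^ 2|) q) (t : ℝ) :
    HasDerivAt (fun s => dPhi φ (deriv q s)) (dPhi φ (q t ^ 2 - α ^ 2) * (2 * q t)) t := by
  have hflux : (fun s => if deriv q s = 0 then 0 else φ |deriv q s| * deriv q s) =
      fun s => dPhi φ (deriv q s) := funext fun s => by
    split_ifs with h
    · simp [h]
    · exact mul_comm _ _
  have := hq.2 t
  simp only [Phi_abs] at this
  rwa [hflux, (hasDerivAt_Phi_sq_sub_sq hφ α (q t)).deriv] at this

lemma IsHeteroclinic.legendrePhi_deriv_eq (hφ : Continuous (dPhi φ))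
    (hq : IsHeteroclinic φ (fun x => Phi φ |x ^ 2 - α ^ 2|) α q) (t : ℝ) :
    legendrePhi φ (deriv q t) = Phi φ (q t ^ 2 - α ^ 2) :=
  have ⟨hsol, hq', _, _, htop, _⟩ := hq
  legendrePhi_deriv_eq_of_tendsto hφ (hasDerivAt_Phi_sq_sub_sq hφ α) hsol.1 hq'
    (hsol.hasDerivAt_dPhi_deriv hφ) htop (by simp) t

lemma IsHeteroclinic.sq_sub_sq_ne_zero (hG : PhiGrowth φ l m) (hl : 1 < l) (hl₂ : l ≤ 2)
    (hα : 0 < α) (hq : IsHeteroclinic φ (fun x => Phi φ |x ^ 2 - α ^ 2|) α q) (t : ℝ) :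
    q t ^ 2 - α ^ 2 ≠ 0 := by
  intro ht
  have ⟨⟨hdiff, _⟩, _, _, hq0, _⟩ := hq
  have hz : ∀ s, HasDerivAt (fun s => q s ^ 2 - α ^ 2) (2 * q s * deriv q s) s := fun s =>
    (((hdiff s).hasDerivAt.pow 2).sub_const _).congr_deriv (by ring)
  have hb : ∀ s, |2 * q s * deriv q s| ≤ 2 * |q s| / (l - 1) * |q s ^ 2 - α ^ 2| := fun s => by
    have := hG.mul_le_of_legendrePhi_eq hl.le hl₂ (abs_nonneg (deriv q s)) (abs_nonneg _)
      (by rw [legendrePhi_abs, Phi_abs]; exact hq.legendrePhi_deriv_eq hG.continuous_dPhi s)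
    rw [abs_mul, abs_mul, abs_two, div_mul_eq_mul_div, le_div_iff₀ (by linarith)]
    nlinarith [abs_nonneg (q s)]
  have := eq_zero_of_abs_deriv_le_mul_abs hz
    (((continuous_abs.comp hdiff.continuous).const_mul 2).div_const _) hb ht 0
  rw [hq0] at this
  nlinarith

lemma IsHeteroclinic.deriv_pos (hG : PhiGrowth φ l m) (hl : 1 < l) (hl₂ : l ≤ 2) (hα : 0 < α)
    (hq : IsHeteroclinic φ (fun x => Phi φ |x ^ 2 - α ^ 2|) α q) (t : ℝ) : 0 < deriv q t := by
  have ⟨⟨hdiff, _⟩, _, hq'c, hq0, htop, _⟩ := hq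
  refine deriv_pos_of_deriv_ne_zero hdiff hq'c (fun s hs => ?_) (by rwa [hq0]) htop t
  have := hq.legendrePhi_deriv_eq hG.continuous_dPhi s
  rw [hs, legendrePhi_zero] at this
  exact (Phi_pos hG.continuous_dPhi hG.pos (hq.sq_sub_sq_ne_zero hG hl hl₂ hα s)).ne this

lemma IsHeteroclinic.abs_sq_sub_sq (hG : PhiGrowth φ l m) (hl : 1 < l) (hl₂ : l ≤ 2)
    (hα : 0 < α) (hq : IsHeteroclinic φ (fun x => Phi φ |x ^ 2 - α ^ 2|) α q) {t : ℝ}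
    (ht : 0 ≤ t) : |q t ^ 2 - α ^ 2| = α ^ 2 - q t ^ 2 := by
  have ⟨_, _, _, hq0, htop, _⟩ := hq
  have hmono : StrictMono q := strictMono_of_deriv_pos (hq.deriv_pos hG hl hl₂ hα)
  have h₀ : 0 ≤ q t := hq0 ▸ hmono.monotone ht
  have hα' : q t < α := (hmono (lt_add_one t)).trans_le (hmono.monotone.ge_of_tendsto htop _)
  rw [abs_of_nonpos (by nlinarith), neg_sub]

lemma IsHeteroclinic.mul_deriv_le (hG : PhiGrowth φ l m) (hl : 1 < l) (hl₂ : l ≤ 2)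
    (hα : 0 < α) (hq : IsHeteroclinic φ (fun x => Phi φ |x ^ 2 - α ^ 2|) α q) {t : ℝ}
    (ht : 0 ≤ t) : (l - 1) * deriv q t ≤ α ^ 2 - q t ^ 2 := by
  have := hG.mul_le_of_legendrePhi_eq hl.le hl₂ (abs_nonneg (deriv q t)) (abs_nonneg _)
    (by rw [legendrePhi_abs, Phi_abs]; exact hq.legendrePhi_deriv_eq hG.continuous_dPhi t)
  rwa [abs_of_pos (hq.deriv_pos hG hl hl₂ hα t), hq.abs_sq_sub_sq hG hl hl₂ hα ht] at this

lemma IsHeteroclinic.sq_sub_sq_lt_deriv (hG : PhiGrowth φ l m) (hl : 1 < l) (hl₂ : l ≤ 2)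
    (hm : m < 2) (hα : 0 < α) (hq : IsHeteroclinic φ (fun x => Phi φ |x ^ 2 - α ^ 2|) α q)
    {t : ℝ} (ht : 0 ≤ t) : α ^ 2 - q t ^ 2 < deriv q t := by
  have hpos := hq.deriv_pos hG hl hl₂ hα t
  have := hG.lt_of_legendrePhi_eq hm (abs_pos.2 hpos.ne') (abs_nonneg (q t ^ 2 - α ^ 2))
    (by rw [legendrePhi_abs, Phi_abs]; exact hq.legendrePhi_deriv_eq hG.continuous_dPhi t)
  rwa [abs_of_pos hpos, hq.abs_sq_sub_sq hG hl hl₂ hα ht] at this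

end Heteroclinic

theorem statement6 (φ : ℝ → ℝ) (l m α : ℝ) (q : ℝ → ℝ)
    (hφC1 : ContDiffOn ℝ 1 φ (Set.Ioi 0))
    (hφpos : ∀ t > 0, 0 < φ t)
    (hφ1 : ∀ t > 0, 0 < deriv (fun s => φ s * s) t)
    (hl : 1 < l) (hlm : l ≤ m)
    (hφ2 : ∀ t > 0, l - 1 ≤ deriv (fun s => φ s * s) t / φ t ∧
      deriv (fun s => φ s * s) t / φ t ≤ m - 1)
    (hφ3 : ∃ c₁ c₂ δ₀ r : ℝ, 0 < c₁ ∧ 0 < c₂ ∧ 0 < δ₀ ∧ 1 < r ∧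
      ∀ t : ℝ, 0 < t → t ≤ δ₀ → c₁ * t ^ (r - 1) ≤ φ t * t ∧ φ t * t ≤ c₂ * t ^ (r - 1))
    (hα : 0 < α)
    (hq : IsHeteroclinic φ (fun t => Phi φ |t ^ 2 - α ^ 2|) α q)
    (hcase : m - 1 < 1) :
    ∀ t : ℝ, 0 ≤ t →
      α * Real.tanh (α * t) ≤ q t ∧ q t ≤ α * Real.tanh (α * t / (l - 1)) := by
  obtain ⟨_, c₂, δ₀, r, -, -, hδ₀, hr, hbound⟩ := hφ3
  have hG : PhiGrowth φ l m :=
    { continuous_dPhi := continuous_dPhi hφC1.continuousOn <|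
        tendsto_mul_nhdsGT_zero_of_le_rpow hδ₀ hr hφpos fun t h₀ hδ => (hbound t h₀ hδ).2
      pos := hφpos
      differentiableAt := fun t ht =>
        (hφC1.contDiffAt (Ioi_mem_nhds ht)).differentiableAt one_ne_zero
      monotoneOn := (strictMonoOn_of_deriv_pos (convex_Ioi 0)
        (hφC1.continuousOn.mul continuousOn_id) (by rwa [interior_Ioi])).monotoneOn
      le_deriv := fun t ht => (le_div_iff₀ (hφpos t ht)).1 (hφ2 t ht).1
      deriv_le := fun t ht => (div_le_iff₀ (hφpos t ht)).1 (hφ2 t ht).2 }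
  have hl₂ : l ≤ 2 := by linarith
  have ⟨⟨hdiff, _⟩, _, _, hq0, _⟩ := hq
  intro t ht
  constructor
  · simpa using mul_tanh_le_of_sq_le one_pos hdiff hq0.ge
      (fun s hs => by linarith [hq.sq_sub_sq_lt_deriv hG hl hl₂ (by linarith) hα hs.le]) ht
  · exact le_mul_tanh_of_le_sq (by linarith) hdiff hq0.le
      (fun s hs => by linarith [hq.mul_deriv_le hG hl hl₂ hα hs.le]) ht
end

section
/- Assume (φ1), V ∈ C¹(ℝ,ℝ), V ≥ 0, V(α) = V(−α) = 0 for some α > 0, and let q be a twice differentiable classical solution with continuous derivative of −(φ(|u'|)u')' + V'(u) = 0 on ℝ with q(t) → α as t → +∞ and q(t) → −α as t → −∞. Then q'(t) → 0 as t → +∞ and q'(t) → 0 as t → −∞. -/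
open Real Filter Set MeasureTheory

/-!
Along a solution the energy `q' φ(|q'|) q' - Φ(q') - V(q)` is constant. Since `q` converges at
`+∞`, the mean value theorem gives times `tₙ → ∞` with `q'(tₙ) → 0`, and there the energy tends to
`-V(α) = 0`; hence `q' φ(|q'|) q' - Φ(q') = V(q)` everywhere. As `t → ±∞` the right side tends to
`V(±α) = 0`, and the left side is a strictly increasing function of `|q'|` by (φ1), so `q' → 0`.
-/

open Asymptotics Topology

theorem integral_le_sub_mul_of_monotoneOn {g : ℝ → ℝ} {a b : ℝ} (hab : a ≤ b)
    (hg : MonotoneOn g (Icc a b)) : ∫ x in a..b, g x ≤ (b - a) * g b := by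
  have hint : IntervalIntegrable g volume a b := by
    rw [← uIcc_of_le hab] at hg
    exact hg.intervalIntegrable
  have hle := intervalIntegral.integral_mono_on hab hint intervalIntegrable_const
    fun x hx => hg hx (right_mem_Icc.2 hab) hx.2
  simpa using hle

/-- Splitting `[a, b]` at its midpoint `m` bounds the increment from `a` to `b` below by
`m (g b - g m) + a (g m - g a) > 0`. -/
theorem strictMonoOn_mul_sub_integral {g : ℝ → ℝ} (hg : StrictMonoOn g (Ici 0)) :
    StrictMonoOn (fun a => a * g a - ∫ x in (0 : ℝ)..a, g x) (Ici 0) := by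
  intro a (ha : 0 ≤ a) b (hb : 0 ≤ b) hab
  set m := (a + b) / 2 with hm
  have ham : a < m := by linarith
  have hmb : m < b := by linarith
  have hmono : ∀ {c d : ℝ}, 0 ≤ c → c ≤ d → MonotoneOn g (Icc c d) := fun hc _ =>
    hg.monotoneOn.mono fun x hx => hc.trans hx.1
  have hint : ∀ {c d : ℝ}, 0 ≤ c → c ≤ d → IntervalIntegrable g volume c d :=
    fun hc hcd => (uIcc_of_le hcd ▸ hmono hc hcd).intervalIntegrable
  have hsplit : ∫ x in (0 : ℝ)..b, g x =
      (∫ x in (0 : ℝ)..a, g x) + (∫ x in a..m, g x) + ∫ x in m..b, g x := by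
    rw [intervalIntegral.integral_add_adjacent_intervals (hint le_rfl ha) (hint ha ham.le),
      intervalIntegral.integral_add_adjacent_intervals (hint le_rfl (ha.trans ham.le))
        (hint (ha.trans ham.le) hmb.le)]
  have h₁ := integral_le_sub_mul_of_monotoneOn ham.le (hmono ha ham.le)
  have h₂ := integral_le_sub_mul_of_monotoneOn hmb.le (hmono (ha.trans ham.le) hmb.le)
  have hgm : g a ≤ g m := hg.monotoneOn ha (ha.trans ham.le) ham.le
  have hgb : g m < g b := hg (ha.trans ham.le) hb hmb
  nlinarith [mul_pos (ha.trans_lt ham) (sub_pos.2 hgb), mul_nonneg ha (sub_nonneg.2 hgm)]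

theorem hasDerivAt_zero_of_abs_le_mul {f g h : ℝ → ℝ} {f' t : ℝ} (hf : HasDerivAt f f' t)
    (hg : Tendsto g (𝓝 t) (𝓝 0)) (hh : h t = 0) (hle : ∀ s, |h s| ≤ |f s - f t| * |g s|) :
    HasDerivAt h 0 t := by
  rw [hasDerivAt_iff_isLittleO]
  have hfg := hf.isBigO_sub.mul_isLittleO ((isLittleO_one_iff ℝ).2 hg)
  simp only [mul_one] at hfg
  refine (IsBigO.of_bound 1 (Eventually.of_forall fun s => ?_)).trans_isLittleO hfg
  simpa [hh, abs_mul] using hle s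

/-- `momentum φ (deriv q s)` is, definitionally, the flux `φ(|q'|) q'` of `IsClassicalSolution`. -/
noncomputable def momentum (φ : ℝ → ℝ) (p : ℝ) : ℝ :=
  if p = 0 then 0 else φ |p| * p

/-- `kineticEnergy φ (q') - V q` is the first integral of the equation. -/
noncomputable def kineticEnergy (φ : ℝ → ℝ) (p : ℝ) : ℝ :=
  p * momentum φ p - Phi φ p

section Energy

variable {φ : ℝ → ℝ}

theorem mul_momentum (p : ℝ) : p * momentum φ p = |p| * (|p| * φ |p|) := by
  rcases eq_or_ne p 0 with rfl | hp
  · simp [momentum]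
  · rw [momentum, if_neg hp]
    linear_combination -φ |p| * abs_mul_abs_self p

theorem kineticEnergy_eq_mul_sub_integral (p : ℝ) :
    kineticEnergy φ p = |p| * (|p| * φ |p|) - ∫ s in (0 : ℝ)..|p|, s * φ s := by
  rw [kineticEnergy, mul_momentum, Phi]

@[simp]
theorem kineticEnergy_zero : kineticEnergy φ 0 = 0 := by
  simp [kineticEnergy_eq_mul_sub_integral]

variable (hg : StrictMonoOn (fun s => s * φ s) (Ici 0))
include hg

theorem kineticEnergy_lt_kineticEnergy_iff {p r : ℝ} :
    kineticEnergy φ p < kineticEnergy φ r ↔ |p| < |r| := by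
  simp only [kineticEnergy_eq_mul_sub_integral]
  exact (strictMonoOn_mul_sub_integral hg).lt_iff_lt (abs_nonneg p) (abs_nonneg r)

theorem kineticEnergy_nonneg (p : ℝ) : 0 ≤ kineticEnergy φ p := by
  rw [← kineticEnergy_zero (φ := φ), ← not_lt, kineticEnergy_lt_kineticEnergy_iff hg]
  simp

theorem Phi_nonneg (p : ℝ) : 0 ≤ Phi φ p := by
  refine intervalIntegral.integral_nonneg (abs_nonneg p) fun s hs => ?_
  simpa using hg.monotoneOn self_mem_Ici hs.1 hs.1

theorem tendsto_kineticEnergy_nhds_zero : Tendsto (kineticEnergy φ) (𝓝 0) (𝓝 0) := by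
  have hbound : ∀ᶠ p in 𝓝 (0 : ℝ), kineticEnergy φ p ≤ |p| * (1 * φ 1) := by
    filter_upwards [Ioo_mem_nhds (neg_lt_zero.2 one_pos) one_pos] with p hp
    have hφp : |p| * φ |p| ≤ 1 * φ 1 :=
      hg.monotoneOn (abs_nonneg p) (mem_Ici.2 zero_le_one) (abs_le.2 ⟨hp.1.le, hp.2.le⟩)
    calc kineticEnergy φ p ≤ |p| * (|p| * φ |p|) := by
          rw [← mul_momentum]; exact sub_le_self _ (Phi_nonneg hg p)
      _ ≤ |p| * (1 * φ 1) := mul_le_mul_of_nonneg_left hφp (abs_nonneg p)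
  refine squeeze_zero' (Eventually.of_forall (kineticEnergy_nonneg hg)) hbound ?_
  simpa using (continuous_abs.tendsto (0 : ℝ)).mul_const (1 * φ 1)

theorem tendsto_zero_of_tendsto_kineticEnergy {ι : Type*} {l : Filter ι} {u : ι → ℝ}
    (hu : Tendsto (fun i => kineticEnergy φ (u i)) l (𝓝 0)) : Tendsto u l (𝓝 0) := by
  refine Metric.tendsto_nhds.2 fun ε hε => ?_
  have hpos : 0 < kineticEnergy φ ε := by
    rw [← kineticEnergy_zero (φ := φ), kineticEnergy_lt_kineticEnergy_iff hg]
    simpa [abs_of_pos hε]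
  filter_upwards [hu (Iio_mem_nhds hpos)] with i hi
  simpa [abs_of_pos hε] using (kineticEnergy_lt_kineticEnergy_iff hg).1 hi

theorem hasDerivAt_Phi_s12 (hφ : ContinuousOn φ (Ioi 0)) {p : ℝ} (hp : p ≠ 0) :
    HasDerivAt (Phi φ) (momentum φ p) p := by
  have hcont : ContinuousOn (fun s => s * φ s) (Ioi 0) := continuousOn_id.mul hφ
  have habs : 0 < |p| := abs_pos.2 hp
  have hint : IntervalIntegrable (fun s => s * φ s) volume 0 |p| :=
    (hg.monotoneOn.mono (by rw [uIcc_of_le habs.le]; exact Icc_subset_Ici_self)).intervalIntegrable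
  have hF := intervalIntegral.integral_hasDerivAt_right hint
    (hcont.stronglyMeasurableAtFilter isOpen_Ioi _ habs)
    (hcont.continuousAt (isOpen_Ioi.mem_nhds habs))
  have hmom : momentum φ p = |p| * φ |p| * SignType.sign p := by
    rw [momentum, if_neg hp, mul_comm |p|, mul_assoc, abs_mul_sign]
  rw [hmom]
  exact hF.comp p (hasDerivAt_abs hp)

/-- At a zero of `f` the bound `Φ(p) ≤ p · momentum(p)` makes `Φ ∘ f` flat, with no regularity of
`φ` at `0`. -/
theorem hasDerivAt_Phi_comp (hφ : ContinuousOn φ (Ioi 0)) {f : ℝ → ℝ} {f' t : ℝ}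
    (hf : HasDerivAt f f' t) (hmom : ContinuousAt (fun s => momentum φ (f s)) t) :
    HasDerivAt (fun s => Phi φ (f s)) (momentum φ (f t) * f') t := by
  by_cases h0 : f t = 0
  · have hmom0 : momentum φ (f t) = 0 := if_pos h0
    rw [hmom0, zero_mul]
    refine hasDerivAt_zero_of_abs_le_mul hf (hmom0 ▸ hmom.tendsto) (by simp [Phi, h0]) fun s => ?_
    rw [h0, sub_zero, abs_of_nonneg (Phi_nonneg hg _), ← abs_mul]
    exact (sub_nonneg.1 (kineticEnergy_nonneg hg (f s))).trans (le_abs_self _)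
  · exact (hasDerivAt_Phi_s12 hg hφ h0).comp t hf

end Energy

theorem exists_seq_tendsto_atTop_deriv_tendsto_zero {f : ℝ → ℝ} {a : ℝ} (hf : Differentiable ℝ f)
    (hlim : Tendsto f atTop (𝓝 a)) :
    ∃ c : ℕ → ℝ, Tendsto c atTop atTop ∧ Tendsto (fun n => deriv f (c n)) atTop (𝓝 0) := by
  have hmvt (n : ℕ) : ∃ c ∈ Ioo (n : ℝ) (n + 1), deriv f c = f (n + 1) - f n := by
    simpa using exists_deriv_eq_slope f (lt_add_one (n : ℝ)) hf.continuous.continuousOn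
      hf.differentiableOn
  choose c hc hslope using hmvt
  refine ⟨c, tendsto_atTop_mono (fun n => (hc n).1.le) tendsto_natCast_atTop_atTop, ?_⟩
  have hn := hlim.comp tendsto_natCast_atTop_atTop
  have hn1 := hlim.comp (tendsto_atTop_add_const_right _ 1 tendsto_natCast_atTop_atTop)
  simpa [hslope] using hn1.sub hn

section Solution

variable {φ V q : ℝ → ℝ} (hg : StrictMonoOn (fun s => s * φ s) (Ici 0))
  (hφ : ContinuousOn φ (Ioi 0))
include hg hφ

theorem IsClassicalSolution.energy_eq (hq : IsClassicalSolution φ V q)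
    (hq' : Differentiable ℝ (deriv q)) (hV : Differentiable ℝ V) (s t : ℝ) :
    kineticEnergy φ (deriv q s) - V (q s) = kineticEnergy φ (deriv q t) - V (q t) := by
  have hE (x : ℝ) : HasDerivAt (fun u => kineticEnergy φ (deriv q u) - V (q u)) 0 x := by
    have hq'x := (hq' x).hasDerivAt
    have hmom : HasDerivAt (fun u => momentum φ (deriv q u)) (deriv V (q x)) x := hq.2 x
    have hderiv := ((hq'x.mul hmom).sub (hasDerivAt_Phi_comp hg hφ hq'x hmom.continuousAt)).sub
      ((hV (q x)).hasDerivAt.comp x (hq.1 x).hasDerivAt)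
    exact hderiv.congr_deriv (by ring)
  exact is_const_of_deriv_eq_zero (fun x => (hE x).differentiableAt) (fun x => (hE x).deriv) s t

/-- The conserved energy vanishes: it is the limit of its values along times where `q' → 0`. -/
theorem IsClassicalSolution.kineticEnergy_deriv_eq (hq : IsClassicalSolution φ V q)
    (hq' : Differentiable ℝ (deriv q)) (hV : Differentiable ℝ V) {α : ℝ}
    (hlim : Tendsto q atTop (𝓝 α)) (hVα : V α = 0) (t : ℝ) :
    kineticEnergy φ (deriv q t) = V (q t) := by
  obtain ⟨c, hc, hq'c⟩ := exists_seq_tendsto_atTop_deriv_tendsto_zero hq.1 hlim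
  have hconv : Tendsto (fun n => kineticEnergy φ (deriv q (c n)) - V (q (c n))) atTop
      (𝓝 (0 - V α)) :=
    ((tendsto_kineticEnergy_nhds_zero hg).comp hq'c).sub
      ((hV.continuous.tendsto α).comp (hlim.comp hc))
  simp only [hq.energy_eq hg hφ hq' hV _ t, hVα, sub_zero] at hconv
  exact sub_eq_zero.1 (tendsto_nhds_unique tendsto_const_nhds hconv)

end Solution

theorem statement12_general (φ V : ℝ → ℝ) (α : ℝ)
    (hφC1 : ContDiffOn ℝ 1 φ (Set.Ioi 0))
    (hφpos : ∀ t > (0:ℝ), 0 < φ t)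
    (hφ1 : ∀ t > (0:ℝ), 0 < deriv (fun s => φ s * s) t)
    (hV1 : ContDiff ℝ 1 V)
    (hVα : V α = 0) (hVα' : V (-α) = 0)
    (q : ℝ → ℝ) (hq : IsClassicalSolution φ V q)
    (hq' : Differentiable ℝ (deriv q))
    (hqtop : Tendsto q atTop (nhds α)) (hqbot : Tendsto q atBot (nhds (-α))) :
    Tendsto (deriv q) atTop (nhds 0) ∧ Tendsto (deriv q) atBot (nhds 0) := by
  have hφ : ContinuousOn φ (Ioi 0) := hφC1.continuousOn
  have hmono : StrictMonoOn (fun s => φ s * s) (Ioi 0) :=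
    strictMonoOn_of_deriv_pos (convex_Ioi 0) (hφ.mul continuousOn_id) fun x hx =>
      hφ1 x (by simpa using hx)
  have hg : StrictMonoOn (fun s => s * φ s) (Ici 0) := by
    intro a (ha : 0 ≤ a) b (hb : 0 ≤ b) hab
    rcases ha.eq_or_lt with rfl | ha
    · simpa using mul_pos hab (hφpos b hab)
    · simpa [mul_comm] using hmono ha (ha.trans hab) hab
  have hV : Differentiable ℝ V := hV1.differentiable one_ne_zero
  have hlim {l : Filter ℝ} {β : ℝ} (hqβ : Tendsto q l (𝓝 β)) (hVβ : V β = 0) :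
      Tendsto (deriv q) l (𝓝 0) := by
    refine tendsto_zero_of_tendsto_kineticEnergy hg ?_
    simpa [Function.comp_def, hq.kineticEnergy_deriv_eq hg hφ hq' hV hqtop hVα, hVβ] using
      (hV.continuous.tendsto β).comp hqβ
  exact ⟨hlim hqtop hVα, hlim hqbot hVα'⟩

theorem statement12 (φ V : ℝ → ℝ) (α : ℝ)
    (hφC1 : ContDiffOn ℝ 1 φ (Set.Ioi 0))
    (hφpos : ∀ t > (0:ℝ), 0 < φ t)
    (hφ1 : ∀ t > (0:ℝ), 0 < deriv (fun s => φ s * s) t)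
    (hV1 : ContDiff ℝ 1 V) (hVnn : ∀ t, 0 ≤ V t)
    (hα : 0 < α) (hVα : V α = 0) (hVα' : V (-α) = 0)
    (q : ℝ → ℝ) (hq : IsClassicalSolution φ V q)
    (hq' : Differentiable ℝ (deriv q)) (hqc : Continuous (deriv q))
    (hqtop : Tendsto q atTop (nhds α)) (hqbot : Tendsto q atBot (nhds (-α))) :
    Tendsto (deriv q) atTop (nhds 0) ∧ Tendsto (deriv q) atBot (nhds 0) :=
  statement12_general φ V α hφC1 hφpos hφ1 hV1 hVα hVα' q hq hq' hqtop hqbot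
end

section
/- Assume (φ1)–(φ2), let V ∈ C¹(ℝ,ℝ) with V ≥ 0, and let q be a twice differentiable classical solution of −(φ(|u'|)u')' + V'(u) = 0 on ℝ with q'(t) > 0 for all t ∈ ℝ and finite energy ∫_ℝ (Φ(q'(t)) + V(q(t))) dt < ∞. Then G(q'(t)) = V(q(t)) for every t ∈ ℝ, where G(t) = ∫₀^t s(φ'(s)s + φ(s)) ds. -/
/-!
Along a solution the quantity `G(q') - V(q)` is conserved: since `G'(y) = y (φ(y) y)'`, its
time derivative is `q' (φ(q') q')' - V'(q) q' = 0`. By (φ1) and (φ2), `0 ≤ G ≤ (m - 1) Φ` on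
`(0, ∞)`, so with `V ≥ 0` the constant `c` satisfies `|c| ≤ m (Φ(q') + V(q))` at every time.
A finite energy integral forces the energy density below any `ε > 0` somewhere, hence `c = 0`.
-/

open Real Filter Set MeasureTheory

noncomputable def Gfun (φ : ℝ → ℝ) (t : ℝ) : ℝ :=
  ∫ s in (0:ℝ)..t, s * (deriv φ s * s + φ s)

lemma intervalIntegrable_of_continuousOn_Ioc_of_norm_le {E : Type*} [NormedAddCommGroup E]
    {f : ℝ → E} {a b C : ℝ} (hab : a ≤ b) (hf : ContinuousOn f (Ioc a b))
    (hC : ∀ s ∈ Ioc a b, ‖f s‖ ≤ C) : IntervalIntegrable f volume a b := by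
  rw [intervalIntegrable_iff_integrableOn_Ioc_of_le hab]
  refine ⟨hf.aestronglyMeasurable measurableSet_Ioc, ?_⟩
  refine HasFiniteIntegral.restrict_of_bounded (C := C) (by simp [Real.volume_Ioc]) ?_
  filter_upwards [ae_restrict_mem measurableSet_Ioc] with s hs using hC s hs

lemma exists_lt_of_lintegral_ofReal_lt_top {α : Type*} [MeasurableSpace α] {μ : Measure α}
    (hμ : μ univ = ⊤) {f : α → ℝ} (hf : ∫⁻ t, ENNReal.ofReal (f t) ∂μ < ⊤) {ε : ℝ}
    (hε : 0 < ε) : ∃ t, f t < ε := by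
  by_contra! h
  have hle : ∫⁻ _, ENNReal.ofReal ε ∂μ ≤ ∫⁻ t, ENNReal.ofReal (f t) ∂μ :=
    lintegral_mono fun t => ENNReal.ofReal_le_ofReal (h t)
  rw [lintegral_const, hμ, ENNReal.mul_top (by simpa using hε)] at hle
  exact (hle.trans_lt hf).false

lemma abs_sub_le_mul_add {g p v m : ℝ} (hg : 0 ≤ g) (hgp : g ≤ (m - 1) * p) (hp : 0 ≤ p)
    (hv : 0 ≤ v) (hm : 1 ≤ m) : |g - v| ≤ m * (p + v) := by
  rw [abs_le]
  constructor <;> nlinarith [mul_nonneg (sub_nonneg.2 hm) hp, mul_nonneg (sub_nonneg.2 hm) hv]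

section Integrand

variable {φ : ℝ → ℝ} {m : ℝ}

lemma hasDerivAt_mul_id {y : ℝ} (h : DifferentiableAt ℝ φ y) :
    HasDerivAt (fun s => φ s * s) (deriv φ y * y + φ y) y := by
  simpa using h.hasDerivAt.fun_mul (hasDerivAt_id y)

lemma differentiableAt_of_contDiffOn_Ioi (hφC1 : ContDiffOn ℝ 1 φ (Ioi 0)) {y : ℝ}
    (hy : 0 < y) : DifferentiableAt ℝ φ y :=
  (hφC1.differentiableOn one_ne_zero).differentiableAt (Ioi_mem_nhds hy)

lemma mul_id_le_mul_id (hφC1 : ContDiffOn ℝ 1 φ (Ioi 0))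
    (hpos : ∀ y > 0, 0 < deriv φ y * y + φ y) {s x : ℝ} (hs : 0 < s) (hsx : s ≤ x) :
    φ s * s ≤ φ x * x := by
  have hD : ∀ y > 0, HasDerivAt (fun s => φ s * s) (deriv φ y * y + φ y) y := fun y hy =>
    hasDerivAt_mul_id (differentiableAt_of_contDiffOn_Ioi hφC1 hy)
  have hmono : StrictMonoOn (fun s => φ s * s) (Ioi 0) :=
    strictMonoOn_of_deriv_pos (convex_Ioi 0)
      (fun y hy => (hD y hy).continuousAt.continuousWithinAt)
      (fun y hy => by
        rw [interior_Ioi] at hy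
        exact (hD y hy).deriv ▸ hpos y hy)
  exact hmono.monotoneOn hs (hs.trans_le hsx) hsx

lemma intervalIntegrable_id_mul (hφC1 : ContDiffOn ℝ 1 φ (Ioi 0))
    (hφpos : ∀ t > (0:ℝ), 0 < φ t) (hpos : ∀ y > 0, 0 < deriv φ y * y + φ y)
    {x : ℝ} (hx : 0 ≤ x) : IntervalIntegrable (fun s => s * φ s) volume 0 x := by
  refine intervalIntegrable_of_continuousOn_Ioc_of_norm_le hx
    (continuousOn_id.mul (hφC1.continuousOn.mono fun s hs => hs.1)) (C := φ x * x) ?_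
  intro s hs
  rw [Real.norm_of_nonneg (mul_pos hs.1 (hφpos s hs.1)).le, mul_comm]
  exact mul_id_le_mul_id hφC1 hpos hs.1 hs.2

lemma continuousOn_Gfun_integrand (hφC1 : ContDiffOn ℝ 1 φ (Ioi 0)) :
    ContinuousOn (fun s => s * (deriv φ s * s + φ s)) (Ioi 0) :=
  continuousOn_id.mul (((hφC1.continuousOn_deriv_of_isOpen isOpen_Ioi le_rfl).mul
    continuousOn_id).add hφC1.continuousOn)

lemma intervalIntegrable_Gfun_integrand (hφC1 : ContDiffOn ℝ 1 φ (Ioi 0))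
    (hφpos : ∀ t > (0:ℝ), 0 < φ t) (hpos : ∀ y > 0, 0 < deriv φ y * y + φ y)
    (hle : ∀ y > 0, deriv φ y * y + φ y ≤ (m - 1) * φ y) {x : ℝ} (hx : 0 ≤ x) :
    IntervalIntegrable (fun s => s * (deriv φ s * s + φ s)) volume 0 x := by
  have hcont := continuousOn_Gfun_integrand hφC1
  refine intervalIntegrable_of_continuousOn_Ioc_of_norm_le hx
    (hcont.mono fun s hs => hs.1) (C := (m - 1) * (φ x * x)) ?_
  intro s hs
  have hs0 := hs.1
  have hsx := mul_id_le_mul_id hφC1 hpos hs0 hs.2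
  have hm : 0 ≤ m - 1 := by
    nlinarith [hφpos s hs0, (hpos s hs0).trans_le (hle s hs0)]
  rw [Real.norm_of_nonneg (mul_pos hs0 (hpos s hs0)).le]
  calc s * (deriv φ s * s + φ s) ≤ s * ((m - 1) * φ s) := by gcongr; exact hle s hs0
    _ = (m - 1) * (φ s * s) := by ring
    _ ≤ (m - 1) * (φ x * x) := by gcongr

lemma hasDerivAt_Gfun (hφC1 : ContDiffOn ℝ 1 φ (Ioi 0)) {y : ℝ} (hy : 0 < y)
    (hint : IntervalIntegrable (fun s => s * (deriv φ s * s + φ s)) volume 0 y) :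
    HasDerivAt (Gfun φ) (y * (deriv φ y * y + φ y)) y := by
  have hcont := continuousOn_Gfun_integrand hφC1
  exact intervalIntegral.integral_hasDerivAt_right hint
    ⟨Ioi 0, Ioi_mem_nhds hy, hcont.aestronglyMeasurable measurableSet_Ioi⟩
    (hcont.continuousAt (Ioi_mem_nhds hy))

lemma Gfun_nonneg (hpos : ∀ y > 0, 0 < deriv φ y * y + φ y) {y : ℝ} (hy : 0 ≤ y) :
    0 ≤ Gfun φ y := by
  refine intervalIntegral.integral_nonneg hy fun s hs => ?_
  rcases hs.1.eq_or_lt with rfl | hs0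
  · simp
  · exact (mul_pos hs0 (hpos s hs0)).le

lemma Phi_nonneg_s13 (hφpos : ∀ t > (0:ℝ), 0 < φ t) (y : ℝ) : 0 ≤ Phi φ y := by
  refine intervalIntegral.integral_nonneg (abs_nonneg y) fun s hs => ?_
  rcases hs.1.eq_or_lt with rfl | hs0
  · simp
  · exact (mul_pos hs0 (hφpos s hs0)).le

lemma Gfun_le_mul_Phi (hφC1 : ContDiffOn ℝ 1 φ (Ioi 0)) (hφpos : ∀ t > (0:ℝ), 0 < φ t)
    (hpos : ∀ y > 0, 0 < deriv φ y * y + φ y)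
    (hle : ∀ y > 0, deriv φ y * y + φ y ≤ (m - 1) * φ y) {y : ℝ} (hy : 0 ≤ y) :
    Gfun φ y ≤ (m - 1) * Phi φ y := by
  rw [Phi, abs_of_nonneg hy, ← intervalIntegral.integral_const_mul]
  refine intervalIntegral.integral_mono_on hy
    (intervalIntegrable_Gfun_integrand hφC1 hφpos hpos hle hy)
    ((intervalIntegrable_id_mul hφC1 hφpos hpos hy).const_mul (m - 1)) fun s hs => ?_
  rcases hs.1.eq_or_lt with rfl | hs0
  · simp
  · calc s * (deriv φ s * s + φ s) ≤ s * ((m - 1) * φ s) := by gcongr; exact hle s hs0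
      _ = (m - 1) * (s * φ s) := by ring

end Integrand

namespace IsClassicalSolution

variable {φ V q : ℝ → ℝ}

lemma hasDerivAt_mul_deriv (hq : IsClassicalSolution φ V q) (hqpos : ∀ t, 0 < deriv q t)
    (t : ℝ) : HasDerivAt (fun s => φ (deriv q s) * deriv q s) (deriv V (q t)) t := by
  have hflux : (fun s => if deriv q s = 0 then 0 else φ |deriv q s| * deriv q s)
      = fun s => φ (deriv q s) * deriv q s := by
    funext s
    rw [if_neg (hqpos s).ne', abs_of_pos (hqpos s)]
  exact hflux ▸ hq.2 t

lemma Gfun_sub_eq_const (hq : IsClassicalSolution φ V q) (hφC1 : ContDiffOn ℝ 1 φ (Ioi 0))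
    (hG : ∀ y > 0, HasDerivAt (Gfun φ) (y * (deriv φ y * y + φ y)) y)
    (hV : Differentiable ℝ V) (hq'' : Differentiable ℝ (deriv q))
    (hqpos : ∀ t, 0 < deriv q t) (t : ℝ) :
    Gfun φ (deriv q t) - V (q t) = Gfun φ (deriv q 0) - V (q 0) := by
  have hderiv : ∀ t, HasDerivAt (fun s => Gfun φ (deriv q s) - V (q s)) 0 t := by
    intro t
    have hq't := (hq'' t).hasDerivAt
    have hflux : (deriv φ (deriv q t) * deriv q t + φ (deriv q t)) * deriv (deriv q) t
        = deriv V (q t) :=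
      ((hasDerivAt_mul_id (differentiableAt_of_contDiffOn_Ioi hφC1 (hqpos t))).comp t
        hq't).unique (hq.hasDerivAt_mul_deriv hqpos t)
    have h := ((hG _ (hqpos t)).comp t hq't).fun_sub
      ((hV (q t)).hasDerivAt.comp t (hq.1 t).hasDerivAt)
    refine h.congr_deriv ?_
    rw [← hflux]
    ring
  exact is_const_of_deriv_eq_zero (fun s => (hderiv s).differentiableAt)
    (fun s => (hderiv s).deriv) t 0

end IsClassicalSolution

theorem statement13_general (φ V : ℝ → ℝ) (l m : ℝ)
    (hφC1 : ContDiffOn ℝ 1 φ (Set.Ioi 0))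
    (hφpos : ∀ t > (0:ℝ), 0 < φ t)
    (hφ1 : ∀ t > (0:ℝ), 0 < deriv (fun s => φ s * s) t)
    (hφ2 : ∀ t > (0:ℝ), l - 1 ≤ deriv (fun s => φ s * s) t / φ t ∧
      deriv (fun s => φ s * s) t / φ t ≤ m - 1)
    (hV1 : ContDiff ℝ 1 V) (hVnn : ∀ t, 0 ≤ V t)
    (q : ℝ → ℝ) (hq : IsClassicalSolution φ V q)
    (hq'' : Differentiable ℝ (deriv q))
    (hqpos : ∀ t : ℝ, 0 < deriv q t)
    (hfin : (∫⁻ t : ℝ, ENNReal.ofReal (Phi φ (deriv q t) + V (q t))) < ⊤) :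
    ∀ t : ℝ, Gfun φ (deriv q t) = V (q t) := by
  have hD : ∀ y > 0, deriv (fun s => φ s * s) y = deriv φ y * y + φ y := fun y hy =>
    (hasDerivAt_mul_id (differentiableAt_of_contDiffOn_Ioi hφC1 hy)).deriv
  have hpos : ∀ y > 0, 0 < deriv φ y * y + φ y := fun y hy => hD y hy ▸ hφ1 y hy
  have hle : ∀ y > 0, deriv φ y * y + φ y ≤ (m - 1) * φ y := fun y hy => by
    have h := (hφ2 y hy).2
    rwa [hD y hy, div_le_iff₀ (hφpos y hy)] at h
  have hm : 1 < m := by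
    nlinarith [hφpos 1 one_pos, (hpos 1 one_pos).trans_le (hle 1 one_pos)]
  have hc := hq.Gfun_sub_eq_const hφC1
    (fun y hy => hasDerivAt_Gfun hφC1 hy
      (intervalIntegrable_Gfun_integrand hφC1 hφpos hpos hle hy.le))
    (hV1.differentiable one_ne_zero) hq'' hqpos
  have hbound : ∀ t, |Gfun φ (deriv q 0) - V (q 0)| ≤ m * (Phi φ (deriv q t) + V (q t)) :=
    fun t => hc t ▸ abs_sub_le_mul_add (Gfun_nonneg hpos (hqpos t).le)
      (Gfun_le_mul_Phi hφC1 hφpos hpos hle (hqpos t).le) (Phi_nonneg_s13 hφpos _) (hVnn (q t))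
      hm.le
  have hc0 : Gfun φ (deriv q 0) - V (q 0) = 0 := by
    by_contra hne
    obtain ⟨t, ht⟩ := exists_lt_of_lintegral_ofReal_lt_top Real.volume_univ hfin
      (div_pos (abs_pos.2 hne) (by linarith : (0:ℝ) < m))
    rw [lt_div_iff₀ (by linarith)] at ht
    linarith [hbound t]
  intro t
  linarith [hc t]

theorem statement13 (φ V : ℝ → ℝ) (l m : ℝ)
    (hφC1 : ContDiffOn ℝ 1 φ (Set.Ioi 0))
    (hφpos : ∀ t > (0:ℝ), 0 < φ t)
    (hφ1 : ∀ t > (0:ℝ), 0 < deriv (fun s => φ s * s) t)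
    (hl : 1 < l) (hlm : l ≤ m)
    (hφ2 : ∀ t > (0:ℝ), l - 1 ≤ deriv (fun s => φ s * s) t / φ t ∧
      deriv (fun s => φ s * s) t / φ t ≤ m - 1)
    (hV1 : ContDiff ℝ 1 V) (hVnn : ∀ t, 0 ≤ V t)
    (q : ℝ → ℝ) (hq : IsClassicalSolution φ V q)
    (hq'' : Differentiable ℝ (deriv q))
    (hqpos : ∀ t : ℝ, 0 < deriv q t)
    (hfin : (∫⁻ t : ℝ, ENNReal.ofReal (Phi φ (deriv q t) + V (q t))) < ⊤) :
    ∀ t : ℝ, Gfun φ (deriv q t) = V (q t) :=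
  statement13_general φ V l m hφC1 hφpos hφ1 hφ2 hV1 hVnn q hq hq'' hqpos hfin
end
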